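/- arXiv:2401.02869 — 4 statements merged into one kernel-verified Lean document; each statement's English description precedes it below -/
import Mathlib

section
/- If a program Π and dataset D are consistent (have a common model), then the canonical interpretation C_{Π,D} = T_Π^{ω₁}(I_D) is the least common model of Π and D: it is a model of both, and it is contained in every common model of Π and D. -/
/-! # A formalisation of basic DatalogMTL notions (ground setting) -/

/-- An interval is an order-convex subset of `ℚ`. -/
def IsInterval (s : Set ℚ) : Prop :=
  ∀ t1 t2 t3 : ℚ, t1 < t2 → t2 < t3 → t1 ∈ s → t3 ∈ s → t2 ∈ s

/-- Interpretations assign to each rational time point a set of ground relational atoms. -/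
abbrev Interp (Atom : Type) := ℚ → Set Atom

/-- Ground metric atoms. -/
inductive MA (Atom : Type) where
  | top : MA Atom
  | bot : MA Atom
  | atom (A : Atom) : MA Atom
  | dminus (ρ : Set ℚ) (M : MA Atom) : MA Atom
  | dplus (ρ : Set ℚ) (M : MA Atom) : MA Atom
  | bminus (ρ : Set ℚ) (M : MA Atom) : MA Atom
  | bplus (ρ : Set ℚ) (M : MA Atom) : MA Atom
  | since (ρ : Set ℚ) (M1 M2 : MA Atom) : MA Atom
  | untl (ρ : Set ℚ) (M1 M2 : MA Atom) : MA Atom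

variable {Atom : Type}

/-- Satisfaction of ground metric atoms at a time point. -/
def sat (I : Interp Atom) : ℚ → MA Atom → Prop
  | _, .top => True
  | _, .bot => False
  | t, .atom A => A ∈ I t
  | t, .dminus ρ M => ∃ t', t - t' ∈ ρ ∧ sat I t' M
  | t, .dplus ρ M => ∃ t', t' - t ∈ ρ ∧ sat I t' M
  | t, .bminus ρ M => ∀ t', t - t' ∈ ρ → sat I t' M
  | t, .bplus ρ M => ∀ t', t' - t ∈ ρ → sat I t' M
  | t, .since ρ M1 M2 =>
      ∃ t', t - t' ∈ ρ ∧ sat I t' M2 ∧ ∀ t'', t' < t'' → t'' < t → sat I t'' M1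
  | t, .untl ρ M1 M2 =>
      ∃ t', t' - t ∈ ρ ∧ sat I t' M2 ∧ ∀ t'', t < t'' → t'' < t' → sat I t'' M1

/-- Ground rule heads, generated by `⊥ | A | ⊟ρ | ⊞ρ`. -/
inductive Hd (Atom : Type) where
  | bot : Hd Atom
  | atom (A : Atom) : Hd Atom
  | bminus (ρ : Set ℚ) (h : Hd Atom) : Hd Atom
  | bplus (ρ : Set ℚ) (h : Hd Atom) : Hd Atom

/-- The metric atom corresponding to a head. -/
def Hd.toMA : Hd Atom → MA Atom
  | .bot => .bot
  | .atom A => .atom A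
  | .bminus ρ h => .bminus ρ h.toMA
  | .bplus ρ h => .bplus ρ h.toMA

/-- Whether a head mentions `⊥` (i.e. the rule is a `⊥`-rule). -/
def Hd.isBot : Hd Atom → Prop
  | .bot => True
  | .atom _ => False
  | .bminus _ h => h.isBot
  | .bplus _ h => h.isBot

/-- The relational atom occurring in a head (none for `⊥`-heads). -/
def Hd.atomOf : Hd Atom → Option Atom
  | .bot => none
  | .atom A => some A
  | .bminus _ h => h.atomOf
  | .bplus _ h => h.atomOf

/-- A ground rule with a non-empty body. -/
structure Rule (Atom : Type) where
  head : Hd Atom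
  body : List (MA Atom)
  body_ne : body ≠ []

/-- `Forces h t A t'` : satisfying head `h` at time `t` requires atom `A` at time `t'`. -/
inductive Forces : Hd Atom → ℚ → Atom → ℚ → Prop where
  | atom (A : Atom) (t : ℚ) : Forces (.atom A) t A t
  | bminus {h : Hd Atom} {s A t'} (ρ : Set ℚ) (t : ℚ) :
      t - s ∈ ρ → Forces h s A t' → Forces (.bminus ρ h) t A t'
  | bplus {h : Hd Atom} {s A t'} (ρ : Set ℚ) (t : ℚ) :
      s - t ∈ ρ → Forces h s A t' → Forces (.bplus ρ h) t A t'

/-- The immediate consequence operator: the least interpretation containing `I` and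
satisfying the head of every non-`⊥` ground rule at every time point where `I`
satisfies all its body atoms. -/
def TP (Φ : Set (Rule Atom)) (I : Interp Atom) : Interp Atom :=
  fun t => I t ∪
    {A | ∃ r ∈ Φ, ¬ r.head.isBot ∧
      ∃ t0, (∀ M ∈ r.body, sat I t0 M) ∧ Forces r.head t0 A t}

/-- A fact `M@ρ` : a ground relational atom together with an interval. -/
abbrev DFact (Atom : Type) := Atom × Set ℚ

abbrev Dataset (Atom : Type) := Set (DFact Atom)

/-- The least model of a dataset. -/
def leastModel (D : Dataset Atom) : Interp Atom :=
  fun t => {A | ∃ ρ, (A, ρ) ∈ D ∧ t ∈ ρ}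

/-- `D ⊨ M@ρ`. -/
def dsat (D : Dataset Atom) (M : MA Atom) (ρ : Set ℚ) : Prop :=
  ∀ t ∈ ρ, sat (leastModel D) t M

def modelsRule (I : Interp Atom) (r : Rule Atom) : Prop :=
  ∀ t, (∀ M ∈ r.body, sat I t M) → sat I t r.head.toMA

def modelsProg (I : Interp Atom) (Φ : Set (Rule Atom)) : Prop :=
  ∀ r ∈ Φ, modelsRule I r

def modelsData (I : Interp Atom) (D : Dataset Atom) : Prop :=
  ∀ F ∈ D, ∀ t ∈ F.2, F.1 ∈ I t

def consistent (Φ : Set (Rule Atom)) (D : Dataset Atom) : Prop :=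
  ∃ I, modelsProg I Φ ∧ modelsData I D

/-- `Φ, D ⊨ A@ρ`. -/
def entailsFact (Φ : Set (Rule Atom)) (D : Dataset Atom) (A : Atom) (ρ : Set ℚ) : Prop :=
  ∀ I, modelsProg I Φ → modelsData I D → ∀ t ∈ ρ, A ∈ I t

/-- Transfinite iteration of an operator on interpretations, taking unions at limits. -/
noncomputable def iterT (T : Interp Atom → Interp Atom) (I0 : Interp Atom) :
    Ordinal → Interp Atom :=
  fun o =>
    Ordinal.limitRecOn o I0 (fun _ ih => T ih)
      (fun o _ ih => fun t => {A | ∃ o', ∃ h : o' < o, A ∈ ih o' h t})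

/-- The first uncountable ordinal. -/
noncomputable def omega1 : Ordinal := (Cardinal.aleph 1).ord

/-- One coalescing step: replace two facts over the same atom whose intervals are
union-compatible by their union. -/
def CoalStep (D D' : Dataset Atom) : Prop :=
  ∃ A ρ1 ρ2, (A, ρ1) ∈ D ∧ (A, ρ2) ∈ D ∧
    IsInterval ρ1 ∧ IsInterval ρ2 ∧ IsInterval (ρ1 ∪ ρ2) ∧ ¬ (ρ1 = ρ2) ∧
    D' = (D \ {(A, ρ1), (A, ρ2)}) ∪ {(A, ρ1 ∪ ρ2)}

/-- `D'` is the result of exhaustively coalescing `E`. -/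
def coalescedFrom (E D' : Dataset Atom) : Prop :=
  Relation.ReflTransGen CoalStep E D' ∧ ∀ E', ¬ CoalStep D' E'

/-- `ρ` is a subset-maximal interval on which `D` satisfies `M`. -/
def maxSat (D : Dataset Atom) (M : MA Atom) (ρ : Set ℚ) : Prop :=
  IsInterval ρ ∧ dsat D M ρ ∧
    ∀ ρ', IsInterval ρ' → dsat D M ρ' → ρ ⊆ ρ' → ρ' = ρ

/-- Semantic entailment `M@ρ0 ⊨ A@ρ` between a metric fact and a relational fact. -/
def mfEntails (M : MA Atom) (ρ0 : Set ℚ) (A : Atom) (ρ : Set ℚ) : Prop :=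
  ∀ I : Interp Atom, (∀ s ∈ ρ0, sat I s M) → ∀ t ∈ ρ, A ∈ I t

/-- An instance of rule `r` for dataset `D` : a list of subset-maximal intervals
for the body atoms. -/
def instOf (r : Rule Atom) (D : Dataset Atom) (ρs : List (Set ℚ)) : Prop :=
  List.Forall₂ (fun M ρ => maxSat D M ρ) r.body ρs

/-- The intersection of a list of intervals. -/
def interList (ρs : List (Set ℚ)) : Set ℚ := ρs.foldr (· ∩ ·) Set.univ

/-- The set of facts derived by rule `r` from dataset `D`. -/
def der (r : Rule Atom) (D : Dataset Atom) : Dataset Atom :=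
  {F | ¬ r.head.isBot ∧ r.head.atomOf = some F.1 ∧
    ∃ ρs, instOf r D ρs ∧
      mfEntails r.head.toMA (interList ρs) F.1 F.2 ∧ IsInterval F.2 ∧
      ∀ ρ', IsInterval ρ' → mfEntails r.head.toMA (interList ρs) F.1 ρ' →
        F.2 ⊆ ρ' → ρ' = F.2}

/-- `Φ[D]`: facts derived from `D` by a one-step application of `Φ`. -/
def progApply (Φ : Set (Rule Atom)) (D : Dataset Atom) : Dataset Atom :=
  {F | ∃ r ∈ Φ, F ∈ der r D}

/-- Instances of `r` for `D` relative to `Δ`. -/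
def instOfRel (r : Rule Atom) (D Δ : Dataset Atom) (ρs : List (Set ℚ)) : Prop :=
  instOf r D ρs ∧ ∃ p ∈ r.body.zip ρs, ¬ dsat (D \ Δ) p.1 p.2

/-- Facts derived by `r` from `D` relative to `Δ`. -/
def derRel (r : Rule Atom) (D Δ : Dataset Atom) : Dataset Atom :=
  {F | ¬ r.head.isBot ∧ r.head.atomOf = some F.1 ∧
    ∃ ρs, instOfRel r D Δ ρs ∧
      mfEntails r.head.toMA (interList ρs) F.1 F.2 ∧ IsInterval F.2 ∧
      ∀ ρ', IsInterval ρ' → mfEntails r.head.toMA (interList ρs) F.1 ρ' →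
        F.2 ⊆ ρ' → ρ' = F.2}

/-- `Φ[D ⋮ Δ]`: one-step semina\"ive application. -/
def progApplyRel (Φ : Set (Rule Atom)) (D Δ : Dataset Atom) : Dataset Atom :=
  {F | ∃ r ∈ Φ, F ∈ derRel r D Δ}

/-- A relational fact entails another relational fact. -/
def dfactEntails (F G : DFact Atom) : Prop := F.1 = G.1 ∧ G.2 ⊆ F.2

/-- A dataset entails a relational fact. -/
def factEntailedBy (E : Dataset Atom) (G : DFact Atom) : Prop :=
  ∀ t ∈ G.2, G.1 ∈ leastModel E t

/-- Atoms occurring in a metric atom. -/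
def atomsMA : MA Atom → Set Atom
  | .top => ∅
  | .bot => ∅
  | .atom A => {A}
  | .dminus _ M => atomsMA M
  | .dplus _ M => atomsMA M
  | .bminus _ M => atomsMA M
  | .bplus _ M => atomsMA M
  | .since _ M1 M2 => atomsMA M1 ∪ atomsMA M2
  | .untl _ M1 M2 => atomsMA M1 ∪ atomsMA M2

/-- Atoms occurring in a head. -/
def atomsHd : Hd Atom → Set Atom
  | .bot => ∅
  | .atom A => {A}
  | .bminus _ h => atomsHd h
  | .bplus _ h => atomsHd h

/-- Atoms occurring in a rule. -/
def atomsRule (r : Rule Atom) : Set Atom :=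
  atomsHd r.head ∪ {A | ∃ M ∈ r.body, A ∈ atomsMA M}

section Predicates

variable {Pred : Type} (Φ : Set (Rule Atom)) (pr : Atom → Pred)

/-- Edge `(Q, R)` of the dependency graph: some rule mentions `Q` in the body
and `R` in the head. -/
def Edge (Q R : Pred) : Prop :=
  ∃ r ∈ Φ, (∃ M ∈ r.body, ∃ A ∈ atomsMA M, pr A = Q) ∧ ∃ A ∈ atomsHd r.head, pr A = R

/-- A predicate is recursive in `Φ` if some path including a cycle ends in it. -/
def RecursivePred (P : Pred) : Prop :=
  ∃ Q, Relation.TransGen (Edge Φ pr) Q Q ∧ Relation.ReflTransGen (Edge Φ pr) Q P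

/-- A rule `r` is `P`-relevant in `Φ`. -/
def PRelevant (P : Pred) (r : Rule Atom) : Prop :=
  ∃ r' ∈ Φ, (r'.head.isBot ∨ ∃ A ∈ atomsHd r'.head, pr A = P) ∧
    ∃ Qh, (∃ A ∈ atomsHd r.head, pr A = Qh) ∧
      ∃ Qb, (∃ M ∈ r'.body, ∃ B ∈ atomsMA M, pr B = Qb) ∧
        Relation.ReflTransGen (Edge Φ pr) Qh Qb

/-- Predicates occurring in a program. -/
def predsOfProg (Φ' : Set (Rule Atom)) : Set Pred :=
  {P | ∃ r ∈ Φ', ∃ A ∈ atomsRule r, pr A = P}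

end Predicates

/-- An interval containing only non-negative rationals. -/
def NonnegInt (ρ : Set ℚ) : Prop := ∀ q ∈ ρ, 0 ≤ q

/-- Metric atoms mentioning only past operators (no `⊤`, `⊥`). -/
def pastOnly : MA Atom → Prop
  | .atom _ => True
  | .dminus ρ M => NonnegInt ρ ∧ pastOnly M
  | .bminus ρ M => NonnegInt ρ ∧ pastOnly M
  | .since ρ M1 M2 => NonnegInt ρ ∧ pastOnly M1 ∧ pastOnly M2
  | _ => False

/-- Heads mentioning only future operators (no `⊥`). -/
def futureHead : Hd Atom → Prop
  | .atom _ => True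
  | .bplus ρ h => NonnegInt ρ ∧ futureHead h
  | _ => False

/-- A forward-propagating program. -/
def ForwardProp (Φ : Set (Rule Atom)) : Prop :=
  ∀ r ∈ Φ, futureHead r.head ∧ ∀ M ∈ r.body, pastOnly M


section CanonicalAux

variable {Atom : Type}

theorem sat_mono' {I J : Interp Atom} (h : ∀ t, I t ⊆ J t) :
    ∀ (M : MA Atom) (t : ℚ), sat I t M → sat J t M := by
  intro M
  induction M with
  | top => intro t _; trivial
  | bot => intro t hs; exact hs.elim
  | atom A => intro t hs; exact h t hs
  | dminus ρ M ih =>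
      rintro t ⟨t', h1, h2⟩; exact ⟨t', h1, ih t' h2⟩
  | dplus ρ M ih =>
      rintro t ⟨t', h1, h2⟩; exact ⟨t', h1, ih t' h2⟩
  | bminus ρ M ih => intro t hs t' ht'; exact ih t' (hs t' ht')
  | bplus ρ M ih => intro t hs t' ht'; exact ih t' (hs t' ht')
  | since ρ M1 M2 ih1 ih2 =>
      rintro t ⟨t', h1, h2, h3⟩
      exact ⟨t', h1, ih2 t' h2, fun t'' ha hb => ih1 t'' (h3 t'' ha hb)⟩
  | untl ρ M1 M2 ih1 ih2 =>
      rintro t ⟨t', h1, h2, h3⟩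
      exact ⟨t', h1, ih2 t' h2, fun t'' ha hb => ih1 t'' (h3 t'' ha hb)⟩

theorem forces_sound' {J : Interp Atom} {h : Hd Atom} {t : ℚ} {A : Atom} {t' : ℚ}
    (hf : Forces h t A t') : sat J t h.toMA → A ∈ J t' := by
  induction hf with
  | atom A t => exact fun hs => hs
  | bminus ρ t hmem _ ih => exact fun hs => ih (hs _ hmem)
  | bplus ρ t hmem _ ih => exact fun hs => ih (hs _ hmem)

theorem forces_complete' {I : Interp Atom} :
    ∀ (h : Hd Atom) (t : ℚ), ¬ h.isBot →
      (∀ A t', Forces h t A t' → A ∈ I t') → sat I t h.toMA := by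
  intro h
  induction h with
  | bot => intro t hb; exact absurd trivial hb
  | atom A => intro t _ hF; exact hF A t (Forces.atom A t)
  | bminus ρ h ih =>
      intro t hb hF s hs
      exact ih s hb (fun A t' hfo => hF A t' (Forces.bminus ρ t hs hfo))
  | bplus ρ h ih =>
      intro t hb hF s hs
      exact ih s hb (fun A t' hfo => hF A t' (Forces.bplus ρ t hs hfo))

theorem sat_isBot' {I J : Interp Atom} :
    ∀ (h : Hd Atom), h.isBot → ∀ t, sat I t h.toMA → sat J t h.toMA := by
  intro h
  induction h with
  | bot => intro _ t hs; exact hs.elim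
  | atom A => intro hb; exact hb.elim
  | bminus ρ h ih => intro hb t hs s hsρ; exact ih hb s (hs s hsρ)
  | bplus ρ h ih => intro hb t hs s hsρ; exact ih hb s (hs s hsρ)

theorem iterT_zero (T : Interp Atom → Interp Atom) (I0 : Interp Atom) :
    iterT T I0 0 = I0 := Ordinal.limitRecOn_zero _ _ _

theorem iterT_succ (T : Interp Atom → Interp Atom) (I0 : Interp Atom) (o : Ordinal) :
    iterT T I0 (Order.succ o) = T (iterT T I0 o) := Ordinal.limitRecOn_succ _ _ _ _

theorem iterT_limit (T : Interp Atom → Interp Atom) (I0 : Interp Atom) (o : Ordinal)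
    (ho : Order.IsSuccLimit o) :
    iterT T I0 o = fun t => {A | ∃ o', ∃ _ : o' < o, A ∈ iterT T I0 o' t} := by
  unfold iterT
  rw [Ordinal.limitRecOn_limit _ _ _ _ ho]

theorem omega1_isLimit : Order.IsSuccLimit omega1 :=
  Cardinal.isSuccLimit_ord (Cardinal.aleph0_le_aleph 1)

universe uu

theorem sup_lt_omega1 (g : ℚ → Ordinal.{uu}) (hg : ∀ q, g q < omega1.{uu}) :
    (⨆ q, g q) < omega1.{uu} := by
  apply Ordinal.iSup_lt_ord_lift _ hg
  have : omega1.{uu}.cof = Cardinal.aleph 1 := Cardinal.isRegular_aleph_one.cof_eq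
  rw [this, Cardinal.mkRat, Cardinal.lift_aleph0]
  exact Cardinal.aleph0_lt_aleph_one

theorem iterT_monotone (T : Interp Atom → Interp Atom) (I0 : Interp Atom)
    (hT : ∀ I t, I t ⊆ T I t) :
    ∀ o' o, o ≤ o' → ∀ t, iterT T I0 o t ⊆ iterT T I0 o' t := by
  intro o'
  induction o' using Ordinal.limitRecOn with
  | zero =>
      intro o ho t
      rw [nonpos_iff_eq_zero.mp ho]
  | add_one o' ih =>
      rw [← Order.succ_eq_add_one]
      intro o ho t
      rcases Order.le_succ_iff_eq_or_le.mp ho with h | h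
      · rw [h]
      · intro A hA
        rw [iterT_succ]
        exact hT (iterT T I0 o') t (ih o h t hA)
  | limit o' hlim ih =>
      intro o ho t A hA
      rcases lt_or_eq_of_le ho with h | h
      · rw [iterT_limit T I0 o' hlim]; exact ⟨o, h, hA⟩
      · rw [← h]; exact hA

theorem sat_stage {f : Ordinal → Interp Atom}
    (hmono : ∀ o o', o ≤ o' → ∀ t, f o t ⊆ f o' t)
    (hlim : ∀ (t : ℚ) (A : Atom), A ∈ f omega1 t → ∃ o, o < omega1 ∧ A ∈ f o t) :
    ∀ (M : MA Atom) (t : ℚ), sat (f omega1) t M → ∃ o, o < omega1 ∧ sat (f o) t M := by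
  intro M
  induction M with
  | top => exact fun t _ => ⟨0, omega1_isLimit.pos, trivial⟩
  | bot => exact fun t hs => hs.elim
  | atom A => exact fun t hs => hlim t A hs
  | dminus ρ M ih =>
      rintro t ⟨t', h1, h2⟩
      obtain ⟨o, ho, hs⟩ := ih t' h2
      exact ⟨o, ho, t', h1, hs⟩
  | dplus ρ M ih =>
      rintro t ⟨t', h1, h2⟩
      obtain ⟨o, ho, hs⟩ := ih t' h2
      exact ⟨o, ho, t', h1, hs⟩
  | bminus ρ M ih =>
      intro t hs
      have key : ∀ q : ℚ, ∃ o, o < omega1 ∧ (t - q ∈ ρ → sat (f o) q M) := by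
        intro q
        by_cases h : t - q ∈ ρ
        · obtain ⟨o, ho, hs'⟩ := ih q (hs q h); exact ⟨o, ho, fun _ => hs'⟩
        · exact ⟨0, omega1_isLimit.pos, fun h' => absurd h' h⟩
      choose g hg1 hg2 using key
      refine ⟨(⨆ q, g q), sup_lt_omega1 g hg1, ?_⟩
      intro t' ht'
      exact sat_mono' (hmono _ _ (Ordinal.le_iSup g t')) _ _ (hg2 t' ht')
  | bplus ρ M ih =>
      intro t hs
      have key : ∀ q : ℚ, ∃ o, o < omega1 ∧ (q - t ∈ ρ → sat (f o) q M) := by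
        intro q
        by_cases h : q - t ∈ ρ
        · obtain ⟨o, ho, hs'⟩ := ih q (hs q h); exact ⟨o, ho, fun _ => hs'⟩
        · exact ⟨0, omega1_isLimit.pos, fun h' => absurd h' h⟩
      choose g hg1 hg2 using key
      refine ⟨(⨆ q, g q), sup_lt_omega1 g hg1, ?_⟩
      intro t' ht'
      exact sat_mono' (hmono _ _ (Ordinal.le_iSup g t')) _ _ (hg2 t' ht')
  | since ρ M1 M2 ih1 ih2 =>
      rintro t ⟨t', h1, h2, h3⟩
      obtain ⟨o2, ho2, hs2⟩ := ih2 t' h2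
      have key : ∀ q : ℚ, ∃ o, o < omega1 ∧ (t' < q → q < t → sat (f o) q M1) := by
        intro q
        by_cases h : t' < q ∧ q < t
        · obtain ⟨o, ho, hs'⟩ := ih1 q (h3 q h.1 h.2); exact ⟨o, ho, fun _ _ => hs'⟩
        · exact ⟨0, omega1_isLimit.pos, fun ha hb => absurd ⟨ha, hb⟩ h⟩
      choose g hg1 hg2 using key
      refine ⟨max o2 ((⨆ q, g q)), max_lt ho2 (sup_lt_omega1 g hg1), t', h1, ?_, ?_⟩
      · exact sat_mono' (hmono o2 _ (le_max_left _ _)) _ _ hs2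
      · intro t'' ha hb
        exact sat_mono'
          (hmono (g t'') _ ((Ordinal.le_iSup g t'').trans (le_max_right _ _))) _ _
          (hg2 t'' ha hb)
  | untl ρ M1 M2 ih1 ih2 =>
      rintro t ⟨t', h1, h2, h3⟩
      obtain ⟨o2, ho2, hs2⟩ := ih2 t' h2
      have key : ∀ q : ℚ, ∃ o, o < omega1 ∧ (t < q → q < t' → sat (f o) q M1) := by
        intro q
        by_cases h : t < q ∧ q < t'
        · obtain ⟨o, ho, hs'⟩ := ih1 q (h3 q h.1 h.2); exact ⟨o, ho, fun _ _ => hs'⟩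
        · exact ⟨0, omega1_isLimit.pos, fun ha hb => absurd ⟨ha, hb⟩ h⟩
      choose g hg1 hg2 using key
      refine ⟨max o2 ((⨆ q, g q)), max_lt ho2 (sup_lt_omega1 g hg1), t', h1, ?_, ?_⟩
      · exact sat_mono' (hmono o2 _ (le_max_left _ _)) _ _ hs2
      · intro t'' ha hb
        exact sat_mono'
          (hmono (g t'') _ ((Ordinal.le_iSup g t'').trans (le_max_right _ _))) _ _
          (hg2 t'' ha hb)

end CanonicalAux

theorem canonical_least_model_aux.{vv} {Atom : Type} (Φ : Set (Rule Atom))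
    (D : Dataset Atom) (hcons : consistent Φ D) :
    modelsProg (iterT.{vv} (TP Φ) (leastModel D) omega1.{vv}) Φ ∧
    modelsData (iterT.{vv} (TP Φ) (leastModel D) omega1.{vv}) D ∧
    ∀ J : Interp Atom, modelsProg J Φ → modelsData J D →
      ∀ t, iterT.{vv} (TP Φ) (leastModel D) omega1.{vv} t ⊆ J t := by
  classical
  set f : Ordinal.{vv} → Interp Atom := iterT.{vv} (TP Φ) (leastModel D) with hf
  have hT : ∀ (I : Interp Atom) (t : ℚ), I t ⊆ TP Φ I t := by
    intro I t A hA; exact Or.inl hA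
  have hmono : ∀ o o', o ≤ o' → ∀ t, f o t ⊆ f o' t :=
    fun o o' h => iterT_monotone (TP Φ) (leastModel D) hT o' o h
  have hlim : ∀ (t : ℚ) (A : Atom), A ∈ f omega1 t → ∃ o, o < omega1 ∧ A ∈ f o t := by
    intro t A hA
    rw [hf, iterT_limit _ _ _ omega1_isLimit] at hA
    obtain ⟨o', ho', h⟩ := hA
    exact ⟨o', ho', h⟩
  have body_stage : ∀ (L : List (MA Atom)) (t0 : ℚ),
      (∀ M ∈ L, sat (f omega1) t0 M) → ∃ o, o < omega1 ∧ ∀ M ∈ L, sat (f o) t0 M := by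
    intro L
    induction L with
    | nil => exact fun t0 _ => ⟨0, omega1_isLimit.pos, by simp⟩
    | cons M L ih =>
        intro t0 hall
        obtain ⟨o1, ho1, h1⟩ := sat_stage hmono hlim M t0 (hall M (by simp))
        obtain ⟨o2, ho2, h2⟩ := ih t0 (fun M' hM' => hall M' (by simp [hM']))
        refine ⟨max o1 o2, max_lt ho1 ho2, ?_⟩
        intro M' hM'
        rcases List.mem_cons.mp hM' with h | h
        · subst h; exact sat_mono' (hmono o1 _ (le_max_left _ _)) _ _ h1
        · exact sat_mono' (hmono o2 _ (le_max_right _ _)) _ _ (h2 M' h)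
  have hfix : ∀ t, TP Φ (f omega1) t ⊆ f omega1 t := by
    intro t A hA
    rcases hA with hA | hA
    · exact hA
    · obtain ⟨r, hr, hnb, t0, hbody, hforce⟩ := hA
      obtain ⟨o, ho, hbo⟩ := body_stage r.body t0 hbody
      have hmem : A ∈ f (Order.succ o) t := by
        rw [hf, iterT_succ]
        exact Or.inr ⟨r, hr, hnb, t0, hbo, hforce⟩
      exact hmono _ _ (omega1_isLimit.succ_lt ho).le t hmem
  have hleast : ∀ (J : Interp Atom), modelsProg J Φ → modelsData J D →
      ∀ o t, f o t ⊆ J t := by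
    intro J hJP hJD o
    induction o using Ordinal.limitRecOn with
    | zero =>
        intro t A hA
        rw [hf, iterT_zero] at hA
        obtain ⟨ρ, hρ, ht⟩ := hA
        exact hJD (A, ρ) hρ t ht
    | add_one o ih =>
        rw [← Order.succ_eq_add_one]
        intro t A hA
        rw [hf, iterT_succ] at hA
        rcases hA with hA | hA
        · exact ih t hA
        · obtain ⟨r, hr, _hnb, t0, hbody, hforce⟩ := hA
          have hbJ : ∀ M ∈ r.body, sat J t0 M :=
            fun M hM => sat_mono' ih M t0 (hbody M hM)
          exact forces_sound' hforce (hJP r hr t0 hbJ)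
    | limit o hlimo ih =>
        intro t A hA
        rw [hf, iterT_limit _ _ _ hlimo] at hA
        obtain ⟨o', ho', hA⟩ := hA
        exact ih o' ho' t hA
  obtain ⟨J0, hJ0P, hJ0D⟩ := hcons
  have hCJ0 : ∀ t, f omega1 t ⊆ J0 t := hleast J0 hJ0P hJ0D omega1
  refine ⟨?_, ?_, fun J hJP hJD => hleast J hJP hJD omega1⟩
  · intro r hr t hbody
    by_cases hb : r.head.isBot
    · have hbJ : ∀ M ∈ r.body, sat J0 t M :=
        fun M hM => sat_mono' hCJ0 M t (hbody M hM)
      exact sat_isBot' r.head hb t (hJ0P r hr t hbJ)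
    · apply forces_complete' r.head t hb
      intro A t' hfo
      exact hfix t' (Or.inr ⟨r, hr, hb, t, hbody, hfo⟩)
  · rintro ⟨A, ρ⟩ hF t ht
    have h0 : A ∈ f 0 t := by
      rw [hf, iterT_zero]; exact ⟨ρ, hF, ht⟩
    exact hmono 0 omega1 zero_le t h0



/-- if `Φ` and `D` are consistent, the canonical interpretation
`C_{Φ,D} = T_Φ^{ω₁}(I_D)` is the least common model of `Φ` and `D`. -/
theorem canonical_least_model {Atom : Type} (Φ : Set (Rule Atom)) (D : Dataset Atom)
    (hΦ : Φ.Finite) (hD : D.Finite) (hcons : consistent Φ D) :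
    modelsProg (iterT (TP Φ) (leastModel D) omega1) Φ ∧
    modelsData (iterT (TP Φ) (leastModel D) omega1) D ∧
    ∀ J : Interp Atom, modelsProg J Φ → modelsData J D →
      ∀ t, iterT (TP Φ) (leastModel D) omega1 t ⊆ J t :=
  ⟨(canonical_least_model_aux Φ D hcons).1, (canonical_least_model_aux Φ D hcons).2.1,
    (canonical_least_model_aux Φ D hcons).2.2⟩
end

section
/- Coalescing preserves semantics: for any dataset D, the least model of D equals the least model of coal(D), where coal(D) is obtained by iteratively replacing two facts M@ρ1 and M@ρ2 with union-compatible intervals by M@(ρ1 ∪ ρ2) until no more such replacements are possible. -/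
variable {Atom : Type}

/-- coalescing preserves the least model. -/
theorem coalescing_preserves_leastModel {Atom : Type} (D D' : Dataset Atom)
    (h : Relation.ReflTransGen CoalStep D D') :
    leastModel D = leastModel D' := by
  induction h with
  | refl => rfl
  | tail _ hstep ih =>
    rw [ih]
    rename_i E E' _
    obtain ⟨A, ρ1, ρ2, h1, h2, _, _, _, _, hE'⟩ := hstep
    subst hE'
    funext t
    ext B
    simp only [leastModel, Set.mem_setOf_eq, Set.mem_union, Set.mem_diff,
      Set.mem_insert_iff, Set.mem_singleton_iff, Prod.mk.injEq]
    constructor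
    · rintro ⟨ρ, hρ, ht⟩
      by_cases hc : (B = A ∧ ρ = ρ1) ∨ (B = A ∧ ρ = ρ2)
      · rcases hc with ⟨rfl, hρ'⟩ | ⟨rfl, hρ'⟩
        · exact ⟨ρ1 ∪ ρ2, Or.inr ⟨rfl, rfl⟩, Or.inl (hρ' ▸ ht)⟩
        · exact ⟨ρ1 ∪ ρ2, Or.inr ⟨rfl, rfl⟩, Or.inr (hρ' ▸ ht)⟩
      · exact ⟨ρ, Or.inl ⟨hρ, by tauto⟩, ht⟩
    · rintro ⟨ρ, hρ | ⟨rfl, rfl⟩, ht⟩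
      · exact ⟨ρ, hρ.1, ht⟩
      · rcases ht with ht | ht
        · exact ⟨ρ1, h1, ht⟩
        · exact ⟨ρ2, h2, ht⟩
end

section
/- Hence naïve materialisation exactly computes the iterates of the immediate consequence operator: for each k ∈ ℕ, the least model of D_k equals T_Π^k(I_D). -/
variable {Atom : Type}

section NaiveAux

variable {Atom : Type}

lemma coalStep_leastModel {D D' : Dataset Atom} (h : CoalStep D D') :
    leastModel D' = leastModel D := by
  obtain ⟨A, ρ1, ρ2, h1, h2, _, _, _, _, hD'⟩ := h
  subst hD'
  funext t
  ext B
  constructor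
  · rintro ⟨ρ, hmem, ht⟩
    rcases hmem with hmem | hmem
    · exact ⟨ρ, hmem.1, ht⟩
    · rcases hmem with ⟨rfl, rfl⟩
      rcases ht with ht | ht
      exacts [⟨ρ1, h1, ht⟩, ⟨ρ2, h2, ht⟩]
  · rintro ⟨ρ, hmem, ht⟩
    by_cases hc : (B, ρ) = (A, ρ1) ∨ (B, ρ) = (A, ρ2)
    · rcases hc with hc | hc
      · obtain ⟨hB, hρ⟩ := Prod.mk.inj hc
        exact ⟨ρ1 ∪ ρ2, Or.inr (by rw [hB]; rfl), Or.inl (hρ ▸ ht)⟩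
      · obtain ⟨hB, hρ⟩ := Prod.mk.inj hc
        exact ⟨ρ1 ∪ ρ2, Or.inr (by rw [hB]; rfl), Or.inr (hρ ▸ ht)⟩
    · exact ⟨ρ, Or.inl ⟨hmem, fun hx => hc (by simpa using hx)⟩, ht⟩

lemma coal_leastModel {D D' : Dataset Atom}
    (h : Relation.ReflTransGen CoalStep D D') : leastModel D' = leastModel D := by
  induction h with
  | refl => rfl
  | tail _ hstep ih => rw [coalStep_leastModel hstep, ih]

lemma isInterval_singleton (t : ℚ) : IsInterval {t} := by
  intro t1 t2 t3 h12 h23 h1 h3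
  simp only [Set.mem_singleton_iff] at h1 h3
  exact absurd (h1 ▸ h3 ▸ h12.trans h23) (lt_irrefl _)

/-- Generic Zorn extension of an interval satisfying a pointwise property to a maximal one. -/
lemma extend_max (Q : ℚ → Prop) (ρ0 : Set ℚ) (h0 : IsInterval ρ0) (hQ : ∀ t ∈ ρ0, Q t) :
    ∃ ρ, ρ0 ⊆ ρ ∧ IsInterval ρ ∧ (∀ t ∈ ρ, Q t) ∧
      ∀ ρ', IsInterval ρ' → (∀ t ∈ ρ', Q t) → ρ ⊆ ρ' → ρ' = ρ := by
  obtain ⟨ρ, hsub, hmax⟩ := zorn_subset_nonempty {ρ | IsInterval ρ ∧ ∀ t ∈ ρ, Q t}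
    (fun c hc hchain hne => by
      refine ⟨⋃₀ c, ⟨?_, ?_⟩, fun s hs => Set.subset_sUnion_of_mem hs⟩
      · intro t1 t2 t3 h12 h23 h1 h3
        obtain ⟨s1, hs1, ht1⟩ := h1
        obtain ⟨s3, hs3, ht3⟩ := h3
        rcases eq_or_ne s1 s3 with rfl | hne13
        · exact ⟨s1, hs1, (hc hs1).1 t1 t2 t3 h12 h23 ht1 ht3⟩
        · rcases hchain hs1 hs3 hne13 with hle | hle
          · exact ⟨s3, hs3, (hc hs3).1 t1 t2 t3 h12 h23 (hle ht1) ht3⟩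
          · exact ⟨s1, hs1, (hc hs1).1 t1 t2 t3 h12 h23 ht1 (hle ht3)⟩
      · rintro t ⟨s, hs, hts⟩
        exact (hc hs).2 t hts) ρ0 ⟨h0, hQ⟩
  exact ⟨ρ, hsub, hmax.prop.1, hmax.prop.2,
    fun ρ' hint hQ' hle => (hmax.eq_of_le ⟨hint, hQ'⟩ hle).symm⟩

lemma mem_interList {t : ℚ} : ∀ {ρs : List (Set ℚ)}, t ∈ interList ρs ↔ ∀ ρ ∈ ρs, t ∈ ρ
  | [] => by simp [interList]
  | ρ :: ρs => by
      simp only [interList, List.foldr_cons, Set.mem_inter_iff, List.mem_cons]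
      rw [show List.foldr (· ∩ ·) Set.univ ρs = interList ρs from rfl, mem_interList]
      constructor
      · rintro ⟨h1, h2⟩ σ (rfl | hσ)
        exacts [h1, h2 σ hσ]
      · intro h
        exact ⟨h ρ (Or.inl rfl), fun σ hσ => h σ (Or.inr hσ)⟩

lemma forall2_mem_left {α β : Type*} {R : α → β → Prop} :
    ∀ {l : List α} {l' : List β}, List.Forall₂ R l l' → ∀ a ∈ l, ∃ b ∈ l', R a b := by
  intro l l' h
  induction h with
  | nil => simp
  | cons hab _ ih =>
    intro a ha
    rcases List.mem_cons.mp ha with rfl | ha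
    · exact ⟨_, List.mem_cons_self .., hab⟩
    · obtain ⟨b, hb, hr⟩ := ih a ha
      exact ⟨b, List.mem_cons_of_mem _ hb, hr⟩

lemma forall2_mem_right {α β : Type*} {R : α → β → Prop} :
    ∀ {l : List α} {l' : List β}, List.Forall₂ R l l' → ∀ b ∈ l', ∃ a ∈ l, R a b := by
  intro l l' h
  induction h with
  | nil => simp
  | cons hab _ ih =>
    intro b hb
    rcases List.mem_cons.mp hb with rfl | hb
    · exact ⟨_, List.mem_cons_self .., hab⟩
    · obtain ⟨a, ha, hr⟩ := ih b hb
      exact ⟨a, List.mem_cons_of_mem _ ha, hr⟩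

lemma forall2_of_forall_exists {α β : Type*} {R : α → β → Prop} :
    ∀ {l : List α}, (∀ a ∈ l, ∃ b, R a b) → ∃ l', List.Forall₂ R l l'
  | [], _ => ⟨[], List.Forall₂.nil⟩
  | a :: l, h => by
      obtain ⟨b, hb⟩ := h a (List.mem_cons_self ..)
      obtain ⟨l', hl'⟩ := forall2_of_forall_exists (fun x hx => h x (List.mem_cons_of_mem _ hx))
      exact ⟨b :: l', List.Forall₂.cons hb hl'⟩

lemma forces_sat {I : Interp Atom} {h : Hd Atom} {s : ℚ} {A : Atom} {t' : ℚ}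
    (hf : Forces h s A t') (hs : sat I s h.toMA) : A ∈ I t' := by
  induction hf with
  | atom A t => exact hs
  | bminus ρ t hmem _ ih => exact ih (hs _ hmem)
  | bplus ρ t hmem _ ih => exact ih (hs _ hmem)

lemma forces_atomOf {h : Hd Atom} {s : ℚ} {A : Atom} {t' : ℚ}
    (hf : Forces h s A t') : h.atomOf = some A ∧ ¬ h.isBot := by
  induction hf with
  | atom A t => exact ⟨rfl, fun h => h⟩
  | bminus ρ t hmem _ ih => exact ih
  | bplus ρ t hmem _ ih => exact ih

lemma sat_forces {I : Interp Atom} {h : Hd Atom} :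
    ∀ {s : ℚ}, ¬ h.isBot → (∀ B t', Forces h s B t' → B ∈ I t') → sat I s h.toMA := by
  induction h with
  | bot => intro s hnb _; exact absurd trivial hnb
  | atom A => intro s _ hcl; exact hcl A s (Forces.atom A s)
  | bminus ρ h ih =>
    intro s hnb hcl t' ht'
    exact ih hnb (fun B u hf => hcl B u (Forces.bminus ρ s ht' hf))
  | bplus ρ h ih =>
    intro s hnb hcl t' ht'
    exact ih hnb (fun B u hf => hcl B u (Forces.bplus ρ s ht' hf))

/-- The key one-step lemma: the least model of `E ∪ Φ[E]` is `T_Φ` of the least model of `E`. -/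
lemma lm_step (Φ : Set (Rule Atom)) (E : Dataset Atom) :
    leastModel (E ∪ progApply Φ E) = TP Φ (leastModel E) := by
  funext t
  ext A
  constructor
  · rintro ⟨ρ, hmem, ht⟩
    rcases hmem with hmem | hmem
    · exact Or.inl ⟨ρ, hmem, ht⟩
    · obtain ⟨r, hr, hnb, hatom, ρs, hinst, hent, hint, hmaxρ⟩ := hmem
      -- the minimal interpretation forced by the head over `interList ρs`
      set I : Interp Atom := fun t' => {B | ∃ s ∈ interList ρs, Forces r.head s B t'} with hI
      have hsat : ∀ s ∈ interList ρs, sat I s r.head.toMA := fun s hs =>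
        sat_forces hnb (fun B t' hf => ⟨s, hs, hf⟩)
      obtain ⟨s, hs, hf⟩ := hent I hsat t ht
      refine Or.inr ⟨r, hr, hnb, s, ?_, hf⟩
      intro M hM
      obtain ⟨ρi, hρi, hmaxi⟩ := forall2_mem_left hinst M hM
      exact hmaxi.2.1 s (mem_interList.mp hs ρi hρi)
  · rintro (⟨ρ, hmem, ht⟩ | ⟨r, hr, hnb, t0, hbody, hf⟩)
    · exact ⟨ρ, Or.inl hmem, ht⟩
    · -- choose maximal intervals for the body atoms, each containing `t0`
      have hex : ∀ M ∈ r.body, ∃ ρ, t0 ∈ ρ ∧ maxSat E M ρ := by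
        intro M hM
        obtain ⟨ρ, hsub, hint, hQ, hmax⟩ := extend_max (fun s => sat (leastModel E) s M)
          {t0} (isInterval_singleton t0) (by rintro s rfl; exact hbody M hM)
        exact ⟨ρ, hsub rfl, hint, hQ, fun ρ' h1 h2 h3 => hmax ρ' h1 h2 h3⟩
      obtain ⟨ρs, hF2⟩ := forall2_of_forall_exists
        (fun M hM => hex M hM)
      have hinst : instOf r E ρs := List.Forall₂.imp (fun _ _ h => h.2) hF2
      have ht0 : t0 ∈ interList ρs := by
        rw [mem_interList]
        intro ρi hρi
        obtain ⟨M, _, hM⟩ := forall2_mem_right hF2 ρi hρi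
        exact hM.1
      -- extend `{t}` to a maximal interval entailed by the head over `interList ρs`
      obtain ⟨ρ, hsub, hint, hQ, hmax⟩ := extend_max
        (fun u => ∀ I : Interp Atom,
          (∀ s ∈ interList ρs, sat I s r.head.toMA) → A ∈ I u)
        {t} (isInterval_singleton t)
        (by rintro u rfl
            intro I hI
            exact forces_sat hf (hI t0 ht0))
      refine ⟨ρ, Or.inr ⟨r, hr, (forces_atomOf hf).2, (forces_atomOf hf).1, ρs, hinst,
        fun I hI u hu => hQ u hu I hI, hint,
        fun ρ' h1 h2 h3 => hmax ρ' h1 (fun u hu I hI => h2 I hI u hu) h3⟩, hsub rfl⟩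

end NaiveAux

/-- naive materialisation exactly computes the iterates of `T_Φ`. -/
theorem naive_exact {Atom : Type} (Φ : Set (Rule Atom)) (D : Dataset Atom)
    (hΦ : Φ.Finite) (hD : D.Finite)
    (Dk : ℕ → Dataset Atom) (h0 : Dk 0 = D)
    (hstep : ∀ k, coalescedFrom (Dk k ∪ progApply Φ (Dk k)) (Dk (k + 1))) :
    ∀ k : ℕ, leastModel (Dk k) = (TP Φ)^[k] (leastModel D) := by
  intro k
  induction k with
  | zero => rw [h0]; rfl
  | succ k ih =>
    have hc := (hstep k).1
    rw [coal_leastModel hc, lm_step, ih, Function.iterate_succ_apply']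
end

section
/- Forward-propagation locality: if Π is a forward-propagating program (rules mention only past operators ⧫, ⊟, S in bodies and only future operators ⊞ in heads, and no ⊤ or ⊥), then for any interpretations I and J agreeing on all time points ≤ t (i.e., satisfying the same ground relational atoms at every time point t' ≤ t), the interpretations T_Π(I) and T_Π(J) also agree on all time points ≤ t. -/
variable {Atom : Type}

lemma pastOnly_sat_iff {Atom : Type} {I J : Interp Atom} {t : ℚ}
    (h : ∀ t' ≤ t, I t' = J t') :
    ∀ (M : MA Atom), pastOnly M → ∀ t' ≤ t, (sat I t' M ↔ sat J t' M) := by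
  intro M
  induction M with
  | top => intro h'; exact h'.elim
  | bot => intro h'; exact h'.elim
  | atom A => intro _ t' ht'; simp [sat, h t' ht']
  | dminus ρ M ih =>
      rintro ⟨hρ, hM⟩ t' ht'
      constructor <;> rintro ⟨s, hs, hsat⟩ <;>
        exact ⟨s, hs, by
          have hst : s ≤ t := le_trans (by linarith [hρ _ hs]) ht'
          first
          | exact (ih hM s hst).mp hsat
          | exact (ih hM s hst).mpr hsat⟩
  | dplus ρ M ih => intro h'; exact h'.elim
  | bminus ρ M ih =>
      rintro ⟨hρ, hM⟩ t' ht'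
      constructor <;> intro hall s hs <;>
        · have hst : s ≤ t := le_trans (by linarith [hρ _ hs]) ht'
          first
          | exact (ih hM s hst).mpr (hall s hs)
          | exact (ih hM s hst).mp (hall s hs)
  | bplus ρ M ih => intro h'; exact h'.elim
  | since ρ M1 M2 ih1 ih2 =>
      rintro ⟨hρ, hM1, hM2⟩ t' ht'
      constructor <;> rintro ⟨s, hs, hsat, hstr⟩ <;>
        refine ⟨s, hs, ?_, ?_⟩
      · exact (ih2 hM2 s (le_trans (by linarith [hρ _ hs]) ht')).mp hsat
      · intro u h1 h2
        exact (ih1 hM1 u (le_trans h2.le ht')).mp (hstr u h1 h2)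
      · exact (ih2 hM2 s (le_trans (by linarith [hρ _ hs]) ht')).mpr hsat
      · intro u h1 h2
        exact (ih1 hM1 u (le_trans h2.le ht')).mpr (hstr u h1 h2)
  | untl ρ M1 M2 ih1 ih2 => intro h'; exact h'.elim

lemma forces_le {Atom : Type} {h : Hd Atom} (hh : futureHead h) :
    ∀ {t0 : ℚ} {A : Atom} {t' : ℚ}, Forces h t0 A t' → t0 ≤ t' := by
  induction h with
  | bot => exact hh.elim
  | atom A => rintro t0 A t' ⟨⟩; rfl
  | bminus ρ h ih => exact hh.elim
  | bplus ρ h ih =>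
      rintro t0 A t' ⟨⟩
      rename_i s hs hf
      obtain ⟨hρ, hfh⟩ := hh
      have := ih hfh hf
      linarith [hρ _ hs]

/-- forward-propagation locality of the immediate consequence operator. -/
theorem forward_locality {Atom : Type} (Φ : Set (Rule Atom)) (hΦ : ForwardProp Φ)
    (I J : Interp Atom) (t : ℚ) (h : ∀ t' ≤ t, I t' = J t') :
    ∀ t' ≤ t, TP Φ I t' = TP Φ J t' := by
  intro t' ht'
  ext A
  simp only [TP, Set.mem_union, Set.mem_setOf_eq, h t' ht']
  constructor <;> rintro (hA | ⟨r, hr, hnb, t0, hbody, hf⟩)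
  · exact Or.inl hA
  · refine Or.inr ⟨r, hr, hnb, t0, ?_, hf⟩
    have ht0 : t0 ≤ t := le_trans (forces_le (hΦ r hr).1 hf) ht'
    intro M hM
    exact (pastOnly_sat_iff h M ((hΦ r hr).2 M hM) t0 ht0).mp (hbody M hM)
  · exact Or.inl hA
  · refine Or.inr ⟨r, hr, hnb, t0, ?_, hf⟩
    have ht0 : t0 ≤ t := le_trans (forces_le (hΦ r hr).1 hf) ht'
    intro M hM
    exact (pastOnly_sat_iff h M ((hΦ r hr).2 M hM) t0 ht0).mpr (hbody M hM)
end
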